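/- arXiv:0809.1688 — 2 statements merged into one kernel-verified Lean document; each statement's English description precedes it below -/
import Mathlib

section
/- Let p be a prime, n a positive integer, and p^e the highest power of p dividing n (e = 0 is allowed). Let P be a Sylow p-subgroup of the symmetric group S_n. Then every subset Λ of X_n(p) that is invariant under P and generates X_n(p) as an abelian group has at least p^e·(n − p^e) elements. -/
/-!
Write `n = p^e k` and identify `Fin n` with `k` blocks, each a copy of `D = (ℤ/p)^e`. The
translations of `D` inside each block form an abelian `p`-group, so after relabelling they lie in
`P` and `Λ` is invariant under them. Summing a vector over each block maps `Λ` onto a spanning set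
of `X_k(p)`, so the supports `S_v` of its values `v` satisfy `∑ (|S_v| - 1) ≥ k - 1`. A function on
`D` with a nonzero period sums to `0` in characteristic `p`; hence translating `a ∈ Λ` inside the
blocks of `S_v` gives `p^{e |S_v|} ≥ p^{2e} (|S_v| - 1)` distinct elements of `Λ` with the same
block sums. For `e = 0` the bound is just `|Λ| ≥ dim X_n(p) = n - 1`.
-/

open Finset Function Module Submodule

section

variable {p : ℕ} [Fact p.Prime]

theorem Function.Periodic.sum_eq_zero {D M : Type*} [AddCommGroup D] [Module (ZMod p) D]
    [Fintype D] [AddCommGroup M] [Module (ZMod p) M] {f : D → M} {δ : D}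
    (hf : Periodic f δ) (hδ : δ ≠ 0) : ∑ d, f d = 0 := by
  classical
  obtain ⟨W, hW⟩ := Submodule.exists_isCompl (ZMod p ∙ δ)
  let φ : W × ZMod p ≃ D := ((LinearEquiv.refl (ZMod p) W).prodCongr
    (LinearEquiv.toSpanNonzeroSingleton (ZMod p) D δ hδ)).toEquiv.trans
    (Submodule.prodEquivOfIsCompl W _ hW.symm).toEquiv
  have hφ (x : W × ZMod p) : f (φ x) = f x.1 := by
    simpa [φ, ← Nat.cast_smul_eq_nsmul (ZMod p)] using hf.nsmul x.2.val x.1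
  rw [← φ.sum_comp, Fintype.sum_prod_type]
  simp [hφ, ZModModule.char_nsmul_eq_zero]

theorem Nat.sq_mul_sub_one_le_pow {m : ℕ} (hm : 2 ≤ m) (s : ℕ) : m ^ 2 * (s - 1) ≤ m ^ s := by
  obtain hs | ⟨j, rfl⟩ : s ≤ 1 ∨ ∃ j, s = j + 2 := by
    rcases s with _ | _ | j <;> simp
  · simp [Nat.sub_eq_zero_of_le hs]
  · calc m ^ 2 * (j + 2 - 1) ≤ m ^ 2 * 2 ^ j := Nat.mul_le_mul_left _ Nat.lt_two_pow_self
      _ ≤ m ^ 2 * m ^ j := Nat.mul_le_mul_left _ (Nat.pow_le_pow_left hm j)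
      _ = m ^ (j + 2) := by ring

section SumZero

variable {K ι : Type*} [Field K] [Fintype ι]

theorem card_sub_one_le_finrank_span {s : Set (ι → K)}
    (hs : ∀ v : ι → K, ∑ i, v i = 0 → v ∈ span K s) :
    Fintype.card ι - 1 ≤ finrank K (span K s) := by
  let σ : (ι → K) →ₗ[K] K := ∑ i, LinearMap.proj i
  have hker : LinearMap.ker σ ≤ span K s := fun v hv => hs v (by simpa [σ] using hv)
  have hrange : finrank K (LinearMap.range σ) ≤ 1 :=
    (Submodule.finrank_le _).trans (finrank_self K).le
  have := σ.finrank_range_add_finrank_ker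
  rw [Module.finrank_fintype_fun_eq_card] at this
  have := Submodule.finrank_mono hker
  omega

variable [DecidableEq K]

theorem exists_finset_card_le_mem_span_of_sum_eq_zero {v : ι → K} (hv : ∑ i, v i = 0) :
    ∃ E : Finset (ι → K), #E ≤ #{i | v i ≠ 0} - 1 ∧ v ∈ span K (E : Set (ι → K)) := by
  classical
  by_cases h : v = 0
  · exact ⟨∅, by simp, by simp [h]⟩
  obtain ⟨i₀, hi₀⟩ := Function.ne_iff.mp h
  set S : Finset ι := {i | v i ≠ 0}
  have hi₀S : i₀ ∈ S := by simpa [S] using hi₀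
  refine ⟨(S.erase i₀).image fun i => Pi.single i 1 - Pi.single i₀ 1,
    card_image_le.trans (card_erase_of_mem hi₀S).le, ?_⟩
  -- the `e_{i₀}` terms add up to `(∑ᵢ vᵢ) • e_{i₀} = 0`
  have hrepr : ∑ i ∈ S.erase i₀, v i • (Pi.single i 1 - Pi.single i₀ 1 : ι → K) = v := by
    rw [sum_erase _ (by simp), sum_filter_of_ne fun i _ hi => left_ne_zero_of_smul hi]
    ext j
    simp [smul_sub, sum_sub_distrib, hv, Finset.sum_apply, Pi.single_apply]
  rw [← hrepr]
  exact Submodule.sum_mem _ fun i hi =>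
    Submodule.smul_mem _ _ (subset_span (mem_image_of_mem _ hi))

theorem finrank_span_le_sum_card_support_sub_one (V : Finset (ι → K))
    (hV : ∀ v ∈ V, ∑ i, v i = 0) :
    finrank K (span K (V : Set (ι → K))) ≤ ∑ v ∈ V, (#{i | v i ≠ 0} - 1) := by
  classical
  choose! E hEcard hEspan using fun v hv => exists_finset_card_le_mem_span_of_sum_eq_zero (hV v hv)
  calc finrank K (span K (V : Set (ι → K)))
      ≤ finrank K (span K (V.biUnion E : Set (ι → K))) :=
        Submodule.finrank_mono <| span_le.2 fun v hv =>
          span_mono (coe_subset.2 (subset_biUnion_of_mem E hv)) (hEspan v hv)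
    _ ≤ #(V.biUnion E) := finrank_span_finset_le_card _
    _ ≤ ∑ v ∈ V, #(E v) := card_biUnion_le
    _ ≤ ∑ v ∈ V, (#{i | v i ≠ 0} - 1) := sum_le_sum hEcard

end SumZero

section BlockShift

variable {κ D : Type*} [AddCommGroup D]

def blockShift (q : κ → D) : Equiv.Perm (κ × D) :=
  Equiv.prodShear (Equiv.refl κ) fun t => Equiv.addRight (q t)

@[simp]
theorem blockShift_apply (q : κ → D) (x : κ × D) : blockShift q x = (x.1, x.2 + q x.1) := rfl

def blockShiftHom : Multiplicative (κ → D) →* Equiv.Perm (κ × D) where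
  toFun q := blockShift q.toAdd
  map_one' := by ext <;> simp
  map_mul' q q' := by ext <;> simp; abel

end BlockShift

section BlockSum

variable {κ D M : Type*} [Fintype D] [AddCommMonoid M]

def blockSum : (κ × D → M) →+ (κ → M) where
  toFun a t := ∑ d, a (t, d)
  map_zero' := by ext; simp
  map_add' a b := by ext; simp [sum_add_distrib]

@[simp]
theorem blockSum_apply (a : κ × D → M) (t : κ) : blockSum a t = ∑ d, a (t, d) := rfl

theorem sum_blockSum [Fintype κ] (a : κ × D → M) : ∑ t, blockSum a t = ∑ x, a x :=
  (Fintype.sum_prod_type a).symm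

theorem blockSum_surjective [Zero D] : Surjective (blockSum : (κ × D → M) → κ → M) := by
  classical
  exact fun w => ⟨fun x => if x.2 = 0 then w x.1 else 0, by ext t; simp⟩

theorem blockSum_comp_blockShift [AddCommGroup D] (a : κ × D → M) (q : κ → D) :
    blockSum (a ∘ blockShift q) = blockSum a := by
  ext t
  exact Equiv.sum_comp (Equiv.addRight (q t)) fun d => a (t, d)

end BlockSum

section Fibres

variable {κ D : Type*} [AddCommGroup D] [Module (ZMod p) D] [Fintype D]

theorem eq_of_comp_blockShift_eq {a : κ × D → ZMod p} {q q' : κ → D}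
    (h : a ∘ blockShift q = a ∘ blockShift q') {t : κ} (ht : blockSum a t ≠ 0) : q t = q' t := by
  by_contra hne
  refine ht (Periodic.sum_eq_zero (p := p) (fun d => ?_) (sub_ne_zero.2 hne))
  have := congrFun h (t, d - q' t)
  simp only [comp_apply, blockShift_apply, sub_add_cancel] at this
  rw [← this]
  abel_nf

theorem card_pow_card_support_le_card_filter [Fintype κ] {Λ : Finset (κ × D → ZMod p)}
    (hΛ : ∀ q, ∀ a ∈ Λ, a ∘ blockShift q ∈ Λ) {a : κ × D → ZMod p} (ha : a ∈ Λ) :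
    Fintype.card D ^ #{t | blockSum a t ≠ 0} ≤ #{b ∈ Λ | blockSum b = blockSum a} := by
  classical
  let Q : Finset (κ → D) := Fintype.piFinset fun t => if blockSum a t = 0 then {0} else univ
  have hQ : #Q = Fintype.card D ^ #{t | blockSum a t ≠ 0} := by
    simp only [Q, Fintype.card_piFinset, apply_ite Finset.card, card_singleton, card_univ]
    rw [prod_ite, prod_const_one, one_mul, prod_const]
  rw [← hQ]
  refine card_le_card_of_injOn (fun q => a ∘ blockShift q) (fun q _ => ?_) fun q hq q' hq' h => ?_
  · simp [hΛ q a ha, blockSum_comp_blockShift]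
  · funext t
    by_cases ht : blockSum a t = 0
    · have hqt := Fintype.mem_piFinset.1 hq t
      have hq't := Fintype.mem_piFinset.1 hq' t
      simp_all
    · exact eq_of_comp_blockShift_eq h ht

end Fibres

theorem sq_card_mul_card_sub_one_le_card {κ D : Type*} [Fintype κ] [AddCommGroup D]
    [Module (ZMod p) D] [Fintype D] [Nontrivial D] (Λ : Finset (κ × D → ZMod p))
    (hsub : ∀ a ∈ Λ, ∑ x, a x = 0) (hinv : ∀ q, ∀ a ∈ Λ, a ∘ blockShift q ∈ Λ)
    (hgen : ∀ b : κ × D → ZMod p, ∑ x, b x = 0 → b ∈ AddSubgroup.closure (Λ : Set _)) :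
    Fintype.card D ^ 2 * (Fintype.card κ - 1) ≤ #Λ := by
  classical
  set V := Λ.image blockSum
  have hV : ∀ v ∈ V, ∑ t, v t = 0 := forall_mem_image.2 fun a ha => by rw [sum_blockSum, hsub a ha]
  have hspan : ∀ w : κ → ZMod p, ∑ t, w t = 0 → w ∈ span (ZMod p) (V : Set (κ → ZMod p)) := by
    intro w hw
    obtain ⟨b, rfl⟩ := blockSum_surjective (D := D) w
    have hle : (AddSubgroup.closure (Λ : Set (κ × D → ZMod p))).map blockSum ≤
        (span (ZMod p) (V : Set (κ → ZMod p))).toAddSubgroup := by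
      rw [AddMonoidHom.map_closure, AddSubgroup.closure_le, coe_image]
      exact subset_span
    exact hle (AddSubgroup.mem_map_of_mem _ (hgen b (by rwa [← sum_blockSum])))
  calc Fintype.card D ^ 2 * (Fintype.card κ - 1)
      ≤ Fintype.card D ^ 2 * ∑ v ∈ V, (#{t | v t ≠ 0} - 1) := Nat.mul_le_mul_left _ <|
        (card_sub_one_le_finrank_span hspan).trans (finrank_span_le_sum_card_support_sub_one V hV)
    _ = ∑ v ∈ V, Fintype.card D ^ 2 * (#{t | v t ≠ 0} - 1) := mul_sum _ _ _
    _ ≤ ∑ v ∈ V, Fintype.card D ^ #{t | v t ≠ 0} :=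
        sum_le_sum fun v _ => Nat.sq_mul_sub_one_le_pow Fintype.one_lt_card _
    _ ≤ ∑ v ∈ V, #{b ∈ Λ | blockSum b = v} :=
        sum_le_sum <| forall_mem_image.2 fun a ha => card_pow_card_support_le_card_filter hinv ha
    _ = #Λ := (card_eq_sum_card_image _ _).symm

theorem IsPGroup.exists_equiv_permCongr_mem {G α β : Type*} [Group G] [Finite α]
    (hG : IsPGroup p G) (φ : G →* Equiv.Perm β) (e : α ≃ β) (P : Sylow p (Equiv.Perm α)) :
    ∃ ε : α ≃ β, ∀ g, ε.symm.permCongr (φ g) ∈ P := by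
  let ψ : G →* Equiv.Perm α := e.symm.permCongrHom.toMonoidHom.comp φ
  obtain ⟨Q, hQ⟩ := (hG.of_surjective ψ.rangeRestrict ψ.rangeRestrict_surjective).exists_le_sylow
  obtain ⟨g, rfl⟩ := MulAction.exists_smul_eq (Equiv.Perm α) Q P
  refine ⟨(g⁻¹ : Equiv.Perm α).trans e, fun x => ?_⟩
  have hx : ψ x ∈ Q := hQ ⟨x, rfl⟩
  rw [← SetLike.mem_coe, Sylow.coe_smul]
  convert Set.smul_mem_smul_set (a := MulAut.conj g) hx using 1
  ext y
  simp [ψ, Equiv.Perm.inv_def]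

theorem sq_card_mul_card_sub_one_le_ncard {α κ D : Type*} [Fintype α] [Fintype κ] [AddCommGroup D]
    [Module (ZMod p) D] [Fintype D] [Nontrivial D] (ε : α ≃ κ × D) {Λ : Set (α → ZMod p)}
    (hsub : ∀ a ∈ Λ, ∑ i, a i = 0)
    (hinv : ∀ q, ∀ a ∈ Λ, a ∘ ε.symm.permCongr (blockShift q) ∈ Λ)
    (hgen : ∀ b : α → ZMod p, ∑ i, b i = 0 → b ∈ AddSubgroup.closure Λ) :
    Fintype.card D ^ 2 * (Fintype.card κ - 1) ≤ Λ.ncard := by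
  let R : (α → ZMod p) ≃+ (κ × D → ZMod p) :=
    (LinearEquiv.funCongrLeft (ZMod p) (ZMod p) ε.symm).toAddEquiv
  have hR (a : α → ZMod p) : R a = a ∘ ε.symm := rfl
  obtain ⟨L, hL⟩ := (Λ.toFinite.image R).exists_finset_coe
  rw [← Set.ncard_image_of_injective Λ R.injective, ← hL, Set.ncard_coe_finset]
  refine sq_card_mul_card_sub_one_le_card L ?_ ?_ ?_
  · simp only [← mem_coe, hL]
    rintro _ ⟨a, ha, rfl⟩
    exact (ε.symm.sum_comp a).trans (hsub a ha)
  · simp only [← mem_coe, hL]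
    rintro q _ ⟨a, ha, rfl⟩
    exact ⟨_, hinv q a ha, by ext; simp [hR]⟩
  · intro b hb
    have hb' : R.symm b ∈ AddSubgroup.closure Λ := hgen _ (by rwa [← ε.sum_comp] at hb)
    have := AddSubgroup.mem_map_of_mem R.toAddMonoidHom hb'
    rw [AddMonoidHom.map_closure] at this
    simpa [hL] using this

end

theorem stmt_1_general (p n e : ℕ) (hp : p.Prime)
    (he : p ^ e ∣ n ∧ ¬ p ^ (e + 1) ∣ n)
    (P : Sylow p (Equiv.Perm (Fin n)))
    (Λ : Set (Fin n → ZMod p))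
    (hΛsub : ∀ a ∈ Λ, ∑ i, a i = 0)
    (hΛinv : ∀ σ ∈ (P : Subgroup (Equiv.Perm (Fin n))),
      (fun a : Fin n → ZMod p => a ∘ ⇑σ⁻¹) '' Λ = Λ)
    (hΛgen : (AddSubgroup.closure Λ : Set (Fin n → ZMod p)) =
      {a : Fin n → ZMod p | ∑ i, a i = 0}) :
    p ^ e * (n - p ^ e) ≤ Λ.ncard := by
  have := Fact.mk hp
  have hgen (b : Fin n → ZMod p) (hb : ∑ i, b i = 0) : b ∈ AddSubgroup.closure Λ := by
    rw [← SetLike.mem_coe, hΛgen]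
    exact hb
  have hinv (σ) (hσ : σ ∈ (P : Subgroup (Equiv.Perm (Fin n)))) (a) (ha : a ∈ Λ) : a ∘ σ ∈ Λ :=
    hΛinv σ⁻¹ (inv_mem hσ) ▸ ⟨a, ha, by simp⟩
  obtain ⟨k, rfl⟩ := he.1
  rcases e with _ | e
  · obtain ⟨L, rfl⟩ := Λ.toFinite.exists_finset_coe
    have := (card_sub_one_le_finrank_span fun b hb =>
      (AddSubgroup.closure_le (span (ZMod p) _).toAddSubgroup).2 subset_span (hgen b hb)).trans
      (finrank_span_finset_le_card L)
    rw [Set.ncard_coe_finset]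
    simpa using this
  · let D := Fin (e + 1) → ZMod p
    obtain ⟨ε, hε⟩ := ZModModule.isPGroup_multiplicative.exists_equiv_permCongr_mem
      (blockShiftHom (κ := Fin k) (D := D)) (Fintype.equivOfCardEq (by simp [D, mul_comm])) P
    have := sq_card_mul_card_sub_one_le_ncard ε hΛsub (fun q => hinv _ (hε (.ofAdd q))) hgen
    simp only [D, Fintype.card_fun, ZMod.card, Fintype.card_fin] at this
    rwa [← Nat.mul_sub_one, ← mul_assoc, ← sq]

/-- Let `p` be a prime, `n` a positive integer and `p^e` the highest
power of `p` dividing `n` (`e = 0` allowed).  Let `P` be a Sylow `p`-subgroup of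
`S_n`.  Every subset `Λ` of `X_n(p) = {a ∈ (ℤ/pℤ)^n : ∑ aᵢ = 0}` that is invariant
under the coordinate-permutation action of `P` and generates `X_n(p)` as an abelian
group has at least `p^e · (n - p^e)` elements. -/
theorem stmt_1 (p n e : ℕ) (hp : p.Prime) (hn : 0 < n)
    (he : p ^ e ∣ n ∧ ¬ p ^ (e + 1) ∣ n)
    (P : Sylow p (Equiv.Perm (Fin n)))
    (Λ : Set (Fin n → ZMod p))
    (hΛsub : ∀ a ∈ Λ, ∑ i, a i = 0)
    (hΛinv : ∀ σ ∈ (P : Subgroup (Equiv.Perm (Fin n))),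
      (fun a : Fin n → ZMod p => a ∘ ⇑σ⁻¹) '' Λ = Λ)
    (hΛgen : (AddSubgroup.closure Λ : Set (Fin n → ZMod p)) =
      {a : Fin n → ZMod p | ∑ i, a i = 0}) :
    p ^ e * (n - p ^ e) ≤ Λ.ncard :=
  stmt_1_general p n e hp he P Λ hΛsub hΛinv hΛgen
end

section
/- Let n ≥ 2 and let B be a nonempty proper subset of {1, …, n}. Then the set Λ = {a_{α,β} : α ∈ B, β ∉ B} generates L_n as an abelian group, and |Λ| = |B|·(n − |B|). -/
/-!
For `i ≠ j` we have `a_{i,j} = e_i - e_j`. Fix `α ∈ B` and `β ∉ B`. Every `e_i - e_β` lies in the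
group generated by `Λ`: it is `a_{i,β}` if `i ∈ B` and `a_{α,β} - a_{α,i}` otherwise. A vector `a`
with coordinate sum zero is `∑ aᵢ (e_i - e_β)`, so `Λ` generates `L_n`. Since `e_i - e_j`
determines `i` and `j` when `i ≠ j`, the map `B × Bᶜ → Λ` is a bijection.
-/

/-- The vector `a_{i,j} ∈ ℤ^n` with entry `1` in position `i`, entry `-1` in
position `j`, and `0` elsewhere. -/
def stdVec {n : ℕ} (i j : Fin n) : Fin n → ℤ :=
  fun h => if h = i then 1 else if h = j then -1 else 0

open Finset

section

variable {ι : Type*} [Fintype ι] [DecidableEq ι]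

variable (ι) in
def zeroSumSubgroup : AddSubgroup (ι → ℤ) :=
  (∑ i, Pi.evalAddMonoidHom (fun _ : ι => ℤ) i).ker

omit [DecidableEq ι] in
theorem mem_zeroSumSubgroup {a : ι → ℤ} : a ∈ zeroSumSubgroup ι ↔ ∑ i, a i = 0 := by
  simp [zeroSumSubgroup]

theorem single_sub_single_mem_zeroSumSubgroup (i j : ι) :
    (Pi.single i 1 - Pi.single j 1 : ι → ℤ) ∈ zeroSumSubgroup ι := by
  simp [mem_zeroSumSubgroup, sum_sub_distrib]

theorem eq_sum_smul_single_sub_single {a : ι → ℤ} (ha : ∑ i, a i = 0) (j : ι) :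
    a = ∑ i, a i • (Pi.single i 1 - Pi.single j 1 : ι → ℤ) := by
  simp_rw [smul_sub, sum_sub_distrib, ← sum_smul, ha, zero_smul, sub_zero, ← Pi.single_smul,
    smul_eq_mul, mul_one, univ_sum_single]

theorem zeroSumSubgroup_le {H : AddSubgroup (ι → ℤ)} (j : ι)
    (hH : ∀ i, (Pi.single i 1 - Pi.single j 1 : ι → ℤ) ∈ H) : zeroSumSubgroup ι ≤ H := by
  intro a ha
  rw [eq_sum_smul_single_sub_single (mem_zeroSumSubgroup.1 ha) j]
  exact sum_mem fun i _ => zsmul_mem (hH i) _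

omit [Fintype ι] in
theorem single_sub_single_injOn :
    Set.InjOn (fun p : ι × ι => (Pi.single p.1 1 - Pi.single p.2 1 : ι → ℤ)) {p | p.1 ≠ p.2} := by
  rintro ⟨i, j⟩ (hij : i ≠ j) ⟨i', j'⟩ (hij' : i' ≠ j') h
  have hi := congrFun h i
  have hj := congrFun h j
  simp only [Pi.sub_apply, Pi.single_apply] at hi hj
  grind

def cutVectors (B : Finset ι) : Finset (ι → ℤ) :=
  (B ×ˢ Bᶜ).image fun p => Pi.single p.1 1 - Pi.single p.2 1

theorem card_cutVectors (B : Finset ι) : #(cutVectors B) = #B * (Fintype.card ι - #B) := by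
  rw [cutVectors, card_image_of_injOn, card_product, card_compl]
  refine single_sub_single_injOn.mono fun p hp => ?_
  simp only [coe_product, coe_compl, Set.mem_prod, mem_coe, Set.mem_compl_iff] at hp
  exact ne_of_mem_of_not_mem hp.1 hp.2

theorem closure_cutVectors {B : Finset ι} (hB : B.Nonempty) (hB' : B ≠ univ) :
    AddSubgroup.closure (cutVectors B : Set (ι → ℤ)) = zeroSumSubgroup ι := by
  obtain ⟨α, hα⟩ := hB
  obtain ⟨β, hβ⟩ := (by simpa [eq_univ_iff_forall] using hB' : ∃ β, β ∉ B)
  have hcut : ∀ {i j}, i ∈ B → j ∉ B →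
      (Pi.single i 1 - Pi.single j 1 : ι → ℤ) ∈ AddSubgroup.closure (cutVectors B : Set (ι → ℤ)) :=
    fun hi hj =>
      AddSubgroup.subset_closure (mem_image.2 ⟨(_, _), mem_product.2 ⟨hi, mem_compl.2 hj⟩, rfl⟩)
  refine le_antisymm ((AddSubgroup.closure_le _).2 ?_) (zeroSumSubgroup_le β fun i => ?_)
  · intro v hv
    obtain ⟨⟨i, j⟩, -, rfl⟩ := mem_image.1 hv
    exact single_sub_single_mem_zeroSumSubgroup i j
  · by_cases hi : i ∈ B
    · exact hcut hi hβ
    · simpa using sub_mem (hcut hα hβ) (hcut hα hi)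

end

theorem stdVec_eq_single_sub_single {n : ℕ} {i j : Fin n} (h : i ≠ j) :
    stdVec i j = Pi.single i 1 - Pi.single j 1 := by
  ext k
  by_cases hi : k = i <;> by_cases hj : k = j <;> simp_all [stdVec]

theorem stmt_9_general (n : ℕ) (B : Finset (Fin n))
    (hB1 : B.Nonempty) (hB2 : B ≠ Finset.univ)
    (Λ : Set (Fin n → ℤ))
    (hΛ : Λ = {v | ∃ α β : Fin n, α ∈ B ∧ β ∉ B ∧ v = stdVec α β}) :
    (AddSubgroup.closure Λ : Set (Fin n → ℤ)) = {a : Fin n → ℤ | ∑ i, a i = 0} ∧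
    Λ.ncard = B.card * (n - B.card) := by
  have hΛ : Λ = cutVectors B := by
    ext v
    simp only [hΛ, cutVectors, coe_image, coe_product, coe_compl, Set.mem_image, Set.mem_prod,
      mem_coe, Set.mem_compl_iff, Prod.exists, Set.mem_ofPred_eq]
    constructor
    · rintro ⟨α, β, hα, hβ, rfl⟩
      exact ⟨α, β, ⟨hα, hβ⟩, (stdVec_eq_single_sub_single (ne_of_mem_of_not_mem hα hβ)).symm⟩
    · rintro ⟨α, β, ⟨hα, hβ⟩, rfl⟩
      exact ⟨α, β, hα, hβ, (stdVec_eq_single_sub_single (ne_of_mem_of_not_mem hα hβ)).symm⟩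
  subst hΛ
  refine ⟨?_, by rw [Set.ncard_coe_finset, card_cutVectors, Fintype.card_fin]⟩
  ext a
  rw [SetLike.mem_coe, closure_cutVectors hB1 hB2, mem_zeroSumSubgroup, Set.mem_ofPred_eq]

/-- Let `n ≥ 2` and let `B` be a nonempty proper subset of `{1,…,n}`.
Then the set `Λ = {a_{α,β} : α ∈ B, β ∉ B}` generates the lattice
`L_n = {a ∈ ℤ^n : ∑ aᵢ = 0}` as an abelian group, and `|Λ| = |B|·(n - |B|)`. -/
theorem stmt_9 (n : ℕ) (hn : 2 ≤ n) (B : Finset (Fin n))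
    (hB1 : B.Nonempty) (hB2 : B ≠ Finset.univ)
    (Λ : Set (Fin n → ℤ))
    (hΛ : Λ = {v | ∃ α β : Fin n, α ∈ B ∧ β ∉ B ∧ v = stdVec α β}) :
    (AddSubgroup.closure Λ : Set (Fin n → ℤ)) = {a : Fin n → ℤ | ∑ i, a i = 0} ∧
    Λ.ncard = B.card * (n - B.card) :=
  stmt_9_general n B hB1 hB2 Λ hΛ
end
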